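/- If f : ℝⁿ → ℝ is Lipschitz with constant L and D is a closed Euclidean ball of radius r > 0 centered at the origin, then the derivative map x ↦ fderiv φ_D (x) is Lipschitz, i.e. there exists a constant K ≥ 0 such that ‖fderiv φ_D (x₁) − fderiv φ_D (x₂)‖ ≤ K ‖x₁ − x₂‖ for all x₁, x₂. -/

import Mathlib

open MeasureTheory
open scoped NNReal

/-- The Steklov-type average of `f` over `D`. -/
noncomputable def steklovAvg (n : ℕ) (D : Set (EuclideanSpace ℝ (Fin n)))
    (f : EuclideanSpace ℝ (Fin n) → ℝ) (x : EuclideanSpace ℝ (Fin n)) : ℝ :=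
  (volume D).toReal⁻¹ • ∫ y in D, f (x + y)

/-! The derivative of the average at `x` is the average of `Df` (defined a.e. by Rademacher's
theorem, and bounded by `L`) over the ball `x + D`. So the derivatives at `x₁` and `x₂` differ by
at most `L / μ(D)` times the measure of the symmetric difference of the two balls, which lies in
the shell between radii `r` and `r + ‖x₁ - x₂‖`, hence is `O(‖x₁ - x₂‖)` for nearby points;
distant points are handled by the uniform bound `2L`. -/

open Metric Module Measure

theorem lipschitzWith_of_bounded_of_local {α β : Type*} [PseudoMetricSpace α]
    [PseudoMetricSpace β] {g : α → β} {K M r : ℝ} (hr : 0 < r)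
    (hbdd : ∀ x y, dist (g x) (g y) ≤ M)
    (hloc : ∀ x y, dist x y ≤ r → dist (g x) (g y) ≤ K * dist x y) :
    LipschitzWith (max K (M / r)).toNNReal g := by
  refine LipschitzWith.of_dist_le' fun x y => ?_
  rcases le_or_gt (dist x y) r with hxy | hxy
  · exact (hloc x y hxy).trans (by gcongr; exact le_max_left _ _)
  · have hM : 0 ≤ M := dist_self (g x) ▸ hbdd x x
    calc dist (g x) (g y) ≤ M / r * r := by rw [div_mul_cancel₀ M hr.ne']; exact hbdd x y
      _ ≤ max K (M / r) * dist x y := by gcongr; exact le_max_right _ _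

theorem norm_setIntegral_sub_setIntegral_le {X F : Type*} [MeasurableSpace X] {μ : Measure X}
    [NormedAddCommGroup F] [NormedSpace ℝ F] {g : X → F} {C : ℝ} {s t : Set X}
    (hg : ∀ x, ‖g x‖ ≤ C) (hgm : AEStronglyMeasurable g μ) (hs : MeasurableSet s)
    (ht : MeasurableSet t) (hμs : μ s ≠ ⊤) (hμt : μ t ≠ ⊤) :
    ‖∫ x in s, g x ∂μ - ∫ x in t, g x ∂μ‖ ≤ C * (μ.real (s \ t) + μ.real (t \ s)) := by
  have hgs : IntegrableOn g s μ := Measure.integrableOn_of_bounded hμs hgm (.of_forall hg)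
  have hgt : IntegrableOn g t μ := Measure.integrableOn_of_bounded hμt hgm (.of_forall hg)
  have hsplit : ∫ x in s, g x ∂μ - ∫ x in t, g x ∂μ
      = ∫ x in s \ t, g x ∂μ - ∫ x in t \ s, g x ∂μ := by
    rw [← integral_inter_add_sdiff ht hgs, ← integral_inter_add_sdiff hs hgt, Set.inter_comm]
    abel
  rw [hsplit, mul_add]
  refine (norm_sub_le _ _).trans (add_le_add ?_ ?_)
  · exact norm_setIntegral_le_of_norm_le_const
      ((measure_mono Set.sdiff_subset).trans_lt hμs.lt_top) fun x _ => hg x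
  · exact norm_setIntegral_le_of_norm_le_const
      ((measure_mono Set.sdiff_subset).trans_lt hμt.lt_top) fun x _ => hg x

section AddHaar

variable {E F : Type*} [NormedAddCommGroup E] [NormedSpace ℝ E] [FiniteDimensional ℝ E]
  [MeasurableSpace E] [BorelSpace E] {μ : Measure E} [μ.IsAddHaarMeasure]
  [NormedAddCommGroup F] [NormedSpace ℝ F]

theorem LipschitzWith.hasFDerivAt_setIntegral_comp_add [FiniteDimensional ℝ F] {f : E → F}
    {L : ℝ≥0} (hf : LipschitzWith L f) {D : Set E} (hD : IsCompact D) (x : E) :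
    HasFDerivAt (fun x => ∫ y in D, f (x + y) ∂μ) (∫ y in D, fderiv ℝ f (x + y) ∂μ) x := by
  have hdiff : ∀ᵐ y ∂μ, DifferentiableAt ℝ f (x + y) :=
    (measurePreserving_add_left μ x).quasiMeasurePreserving.ae hf.ae_differentiableAt
  refine (hasFDerivAt_integral_of_dominated_loc_of_lip (bound := fun _ => (L : ℝ))
    Filter.univ_mem ?_ ?_ ?_ ?_ ?_ ?_).2
  · exact .of_forall fun x' =>
      (hf.continuous.comp (continuous_const_add x')).aestronglyMeasurable
  · exact ((hf.continuous.comp (continuous_const_add x)).continuousOn).integrableOn_compact hD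
  · exact ((measurable_fderiv ℝ f).comp (measurable_const_add x)).aestronglyMeasurable
  · refine .of_forall fun y => ?_
    refine (LipschitzWith.of_dist_le_mul fun a b => ?_).lipschitzOnWith
    simpa using hf.dist_le_mul (a + y) (b + y)
  · exact integrableOn_const hD.measure_lt_top.ne
  · refine ae_restrict_of_ae (hdiff.mono fun y hy => ?_)
    rw [hasFDerivAt_comp_add_right]
    exact hy.hasFDerivAt

theorem measureReal_closedBall_sdiff_closedBall_le (x y : E) {r : ℝ} (hr : 0 ≤ r) :
    μ.real (closedBall x r \ closedBall y r)
      ≤ ((r + dist x y) ^ finrank ℝ E - r ^ finrank ℝ E) * μ.real (closedBall 0 1) := by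
  have hsub : closedBall x r ⊆ closedBall y (r + dist x y) :=
    closedBall_subset_closedBall' (by rw [dist_comm])
  have hr' : closedBall y r ⊆ closedBall y (r + dist x y) :=
    closedBall_subset_closedBall (le_add_of_nonneg_right dist_nonneg)
  calc μ.real (closedBall x r \ closedBall y r)
      ≤ μ.real (closedBall y (r + dist x y) \ closedBall y r) :=
        measureReal_mono (Set.sdiff_subset_sdiff_left hsub)
          (measure_ne_top_of_subset Set.sdiff_subset measure_closedBall_lt_top.ne)
    _ = _ := by
        rw [measureReal_sdiff hr' measurableSet_closedBall measure_closedBall_lt_top.ne,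
          addHaar_real_closedBall' μ y (by positivity), addHaar_real_closedBall' μ y hr, sub_mul]

theorem exists_lipschitzWith_setIntegral_comp_add_closedBall {g : E → F} {C : ℝ}
    (hg : ∀ z, ‖g z‖ ≤ C) (hgm : AEStronglyMeasurable g μ) {r : ℝ} (hr : 0 < r) :
    ∃ K, LipschitzWith K (fun x => ∫ y in closedBall 0 r, g (x + y) ∂μ) := by
  set k := finrank ℝ E
  set v := μ.real (closedBall (0 : E) 1)
  have hC : 0 ≤ C := (norm_nonneg _).trans (hg 0)
  have htrans : ∀ x, ∫ y in closedBall 0 r, g (x + y) ∂μ = ∫ z in closedBall x r, g z ∂μ := by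
    intro x
    have hpre : (x + ·) ⁻¹' closedBall x r = closedBall (0 : E) r := by
      ext y; simp [dist_eq_norm]
    rw [← hpre]
    exact (measurePreserving_add_left μ x).setIntegral_preimage_emb
      (measurableEmbedding_addLeft x) _ _
  have hnorm : ∀ x, ‖∫ y in closedBall 0 r, g (x + y) ∂μ‖ ≤ C * μ.real (closedBall (0 : E) r) :=
    fun x => norm_setIntegral_le_of_norm_le_const measure_closedBall_lt_top fun y _ => hg _
  refine ⟨_, lipschitzWith_of_bounded_of_local (K := 2 * C * (k * (2 * r) ^ (k - 1) * v))
    (M := 2 * (C * μ.real (closedBall (0 : E) r))) hr (fun x₁ x₂ => ?_) (fun x₁ x₂ hd => ?_)⟩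
  · rw [dist_eq_norm, two_mul]
    exact (norm_sub_le _ _).trans (add_le_add (hnorm x₁) (hnorm x₂))
  · set d := dist x₁ x₂
    have hpow : (r + d) ^ k - r ^ k ≤ d * k * (2 * r) ^ (k - 1) := by
      have h := abs_pow_sub_pow_le (r + d) r k
      have hd₀ : 0 ≤ d := dist_nonneg
      rw [add_sub_cancel_left, abs_of_nonneg hd₀, abs_of_nonneg (by linarith : 0 ≤ r + d),
        abs_of_pos hr, max_eq_left (by linarith)] at h
      refine (le_abs_self _).trans (h.trans ?_)
      gcongr
      linarith
    rw [dist_eq_norm, htrans, htrans]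
    calc ‖∫ z in closedBall x₁ r, g z ∂μ - ∫ z in closedBall x₂ r, g z ∂μ‖
        ≤ C * (μ.real (closedBall x₁ r \ closedBall x₂ r)
            + μ.real (closedBall x₂ r \ closedBall x₁ r)) :=
          norm_setIntegral_sub_setIntegral_le hg hgm measurableSet_closedBall
            measurableSet_closedBall measure_closedBall_lt_top.ne measure_closedBall_lt_top.ne
      _ ≤ C * (((r + d) ^ k - r ^ k) * v + ((r + d) ^ k - r ^ k) * v) := by
          gcongr
          · exact measureReal_closedBall_sdiff_closedBall_le x₁ x₂ hr.le
          · have h := measureReal_closedBall_sdiff_closedBall_le (μ := μ) x₂ x₁ hr.le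
            rwa [dist_comm] at h
      _ ≤ C * (d * k * (2 * r) ^ (k - 1) * v + d * k * (2 * r) ^ (k - 1) * v) := by
          gcongr
      _ = 2 * C * (k * (2 * r) ^ (k - 1) * v) * d := by ring

end AddHaar

theorem steklov_average_fderiv_lipschitz_general (n : ℕ) (r : ℝ) (hr : 0 < r)
    (f : EuclideanSpace ℝ (Fin n) → ℝ) (L : ℝ≥0) (hf : LipschitzWith L f) :
    ∃ K : ℝ, 0 ≤ K ∧ ∀ x₁ x₂ : EuclideanSpace ℝ (Fin n),
      ‖fderiv ℝ (steklovAvg n (Metric.closedBall 0 r) f) x₁ -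
        fderiv ℝ (steklovAvg n (Metric.closedBall 0 r) f) x₂‖ ≤ K * ‖x₁ - x₂‖ := by
  set c := (volume (closedBall (0 : EuclideanSpace ℝ (Fin n)) r)).toReal
  obtain ⟨K, hK⟩ := exists_lipschitzWith_setIntegral_comp_add_closedBall (μ := volume)
    (fun z => norm_fderiv_le_of_lipschitz ℝ hf) (measurable_fderiv ℝ f).aestronglyMeasurable hr
  have hφ' : fderiv ℝ (steklovAvg n (closedBall 0 r) f)
      = fun x => c⁻¹ • ∫ y in closedBall 0 r, fderiv ℝ f (x + y) := funext fun x =>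
    ((hf.hasFDerivAt_setIntegral_comp_add (isCompact_closedBall 0 r) x).const_smul c⁻¹).fderiv
  refine ⟨‖c⁻¹‖₊ * K, by positivity, fun x₁ x₂ => ?_⟩
  simpa only [hφ', dist_eq_norm, Function.comp_apply, NNReal.coe_mul] using
    ((lipschitzWith_smul c⁻¹).comp hK).dist_le_mul x₁ x₂

/-- For a Lipschitz `f` and `D` a closed ball of radius `r > 0` centered at the origin,
the derivative of the Steklov average is a Lipschitz map. -/
theorem steklov_average_fderiv_lipschitz (n : ℕ) (hn : 1 ≤ n) (r : ℝ) (hr : 0 < r)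
    (f : EuclideanSpace ℝ (Fin n) → ℝ) (L : ℝ≥0) (hf : LipschitzWith L f) :
    ∃ K : ℝ, 0 ≤ K ∧ ∀ x₁ x₂ : EuclideanSpace ℝ (Fin n),
      ‖fderiv ℝ (steklovAvg n (Metric.closedBall 0 r) f) x₁ -
        fderiv ℝ (steklovAvg n (Metric.closedBall 0 r) f) x₂‖ ≤ K * ‖x₁ - x₂‖ :=
  steklov_average_fderiv_lipschitz_general n r hr f L hf
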